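/- Conversely, any derivation of ∇ ⊢ a.b.t ≈ b.b.t with a ≠ b contains a subderivation of ∇ ⊢ a # t; hence a nominal problem with freshness equation a #? t has exactly the same solutions as the problem where it is replaced by the equality equation a.b.t ≈? b.b.t, for any b ≠ a. -/

import Mathlib

set_option linter.unreachableTactic false
set_option linter.unusedTactic false

/-! Nominal terms -/

abbrev Atom := ℕ
abbrev Var := ℕ

/-- The swapping `(a b)` acting on atoms. -/
def swapAtom (a b c : Atom) : Atom := if c = a then b else if c = b then a else c

/-- A permutation presented as a finite list of swappings. -/
abbrev Perm0 := List (Atom × Atom)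

/-- Action of a list of swappings: `(a₁ b₁)…(aₙ bₙ)·c = (a₁ b₁)·(…·((aₙ bₙ)·c))`. -/
def permAtom (π : Perm0) (c : Atom) : Atom := π.foldr (fun p d => swapAtom p.1 p.2 d) c

/-- Nominal terms. -/
inductive NTerm where
  | atom : Atom → NTerm
  | app  : ℕ → List NTerm → NTerm
  | abs  : Atom → NTerm → NTerm
  | susp : Perm0 → Var → NTerm

/-- Action of a permutation (list of swappings) on a nominal term. -/
def permTerm (π : Perm0) : NTerm → NTerm
  | .atom a => .atom (permAtom π a)
  | .app f ts => .app f (ts.attach.map (fun t => permTerm π t.1))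
  | .abs a t => .abs (permAtom π a) (permTerm π t)
  | .susp π' X => .susp (π ++ π') X
decreasing_by
  all_goals simp_wf
  all_goals first
    | (have := List.sizeOf_lt_of_mem t.2; omega)
    | omega

/-- Action of a single swapping on a nominal term. -/
def swapTerm (a b : Atom) (t : NTerm) : NTerm := permTerm [(a, b)] t

/-- Variables of a nominal term. -/
def nvars : NTerm → Finset Var
  | .atom _ => ∅
  | .app _ ts => ts.attach.foldr (fun t s => nvars t.1 ∪ s) ∅
  | .abs _ t => nvars t
  | .susp _ X => {X}
decreasing_by
  all_goals simp_wf
  all_goals first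
    | (have := List.sizeOf_lt_of_mem t.2; omega)
    | omega

/-- Atoms of a nominal term (including those in suspended permutations). -/
def natoms : NTerm → Finset Atom
  | .atom a => {a}
  | .app _ ts => ts.attach.foldr (fun t s => natoms t.1 ∪ s) ∅
  | .abs a t => insert a (natoms t)
  | .susp π _ => π.foldr (fun p s => insert p.1 (insert p.2 s)) ∅
decreasing_by
  all_goals simp_wf
  all_goals first
    | (have := List.sizeOf_lt_of_mem t.2; omega)
    | omega

/-- Size of a nominal term. -/
def sizeN : NTerm → ℕ
  | .atom _ => 1
  | .app _ ts => 1 + (ts.attach.map (fun t => sizeN t.1)).sum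
  | .abs _ t => 1 + sizeN t
  | .susp π _ => 1 + π.length
decreasing_by
  all_goals simp_wf
  all_goals first
    | (have := List.sizeOf_lt_of_mem t.2; omega)
    | omega

/-! Freshness and α-equivalence for nominal terms -/

/-- The freshness judgement `Δ ⊢ a # t`. -/
inductive Fresh (Δ : Finset (Atom × Var)) : Atom → NTerm → Prop
  | atom {a a'} : a ≠ a' → Fresh Δ a (.atom a')
  | susp {a π X} : (permAtom π.reverse a, X) ∈ Δ → Fresh Δ a (.susp π X)
  | app {a f ts} : (∀ t ∈ ts, Fresh Δ a t) → Fresh Δ a (.app f ts)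
  | abs1 {a t} : Fresh Δ a (.abs a t)
  | abs2 {a a' t} : a ≠ a' → Fresh Δ a t → Fresh Δ a (.abs a' t)

/-- The α-equivalence judgement `Δ ⊢ t ≈ u`. -/
inductive Alpha (Δ : Finset (Atom × Var)) : NTerm → NTerm → Prop
  | atom (a) : Alpha Δ (.atom a) (.atom a)
  | susp {π π' X} : (∀ a, permAtom π a ≠ permAtom π' a → (a, X) ∈ Δ) →
      Alpha Δ (.susp π X) (.susp π' X)
  | app {f ts us} : ts.length = us.length →
      (∀ p ∈ ts.zip us, Alpha Δ p.1 p.2) → Alpha Δ (.app f ts) (.app f us)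
  | abs1 {a t u} : Alpha Δ t u → Alpha Δ (.abs a t) (.abs a u)
  | abs2 {a b t u} : a ≠ b → Alpha Δ t (swapTerm a b u) → Fresh Δ a u →
      Alpha Δ (.abs a t) (.abs b u)

/-- Nominal substitutions (partial, with explicit domain). -/
abbrev NSub := Var → Option NTerm

/-- Domain of a nominal substitution. -/
def domN (σ : NSub) : Set Var := {X | (σ X).isSome}

/-- Application of a nominal substitution (capturing; suspended permutations are applied). -/
def applyN (σ : NSub) : NTerm → NTerm
  | .atom a => .atom a
  | .app f ts => .app f (ts.attach.map (fun t => applyN σ t.1))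
  | .abs a t => .abs a (applyN σ t)
  | .susp π X =>
      match σ X with
      | some u => permTerm π u
      | none => .susp π X
decreasing_by
  all_goals simp_wf
  all_goals first
    | (have := List.sizeOf_lt_of_mem t.2; omega)
    | omega

/-- The trivial suspension of a variable. -/
def nsuspV (X : Var) : NTerm := .susp [] X

/-! λ-terms -/

/-- λ-calculus variables: either (the image of) an atom or (the image of) a nominal variable. -/
abbrev LVar := Atom ⊕ Var

/-- Untyped λ-terms with constants. -/
inductive LTerm where
  | var : LVar → LTerm
  | const : ℕ → LTerm
  | lam : LVar → LTerm → LTerm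
  | app : LTerm → LTerm → LTerm
deriving DecidableEq

/-- Iterated application `h(t₁,…,tₙ)`. -/
def appList (h : LTerm) (ts : List LTerm) : LTerm := ts.foldl .app h

/-- Iterated abstraction `λx₁…λxₙ.t`. -/
def lamList (xs : List LVar) (t : LTerm) : LTerm := xs.foldr .lam t

/-- Free variables of a λ-term. -/
def FVL : LTerm → Finset LVar
  | .var v => {v}
  | .const _ => ∅
  | .lam x t => (FVL t).erase x
  | .app t u => FVL t ∪ FVL u

/-- All variables (free, bound and binding) of a λ-term. -/
def allVarsL : LTerm → Finset LVar
  | .var v => {v}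
  | .const _ => ∅
  | .lam x t => insert x (allVarsL t)
  | .app t u => allVarsL t ∪ allVarsL u

/-- Binder variables of a λ-term. -/
def bvarsL : LTerm → Finset LVar
  | .var _ => ∅
  | .const _ => ∅
  | .lam x t => insert x (bvarsL t)
  | .app t u => bvarsL t ∪ bvarsL u

/-- Size of a λ-term. -/
def sizeL : LTerm → ℕ
  | .var _ => 1
  | .const _ => 1
  | .lam _ t => 1 + sizeL t
  | .app t u => 1 + sizeL t + sizeL u

/-- The function on variable names exchanging `x` and `y`. -/
def varMap (x y : LVar) : LVar → LVar := fun z => if z = x then y else if z = y then x else z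

/-- Renaming all occurrences of variables (free, bound and binding) of a λ-term. -/
def renameAll (f : LVar → LVar) : LTerm → LTerm
  | .var v => .var (f v)
  | .const c => .const c
  | .lam x t => .lam (f x) (renameAll f t)
  | .app t u => .app (renameAll f t) (renameAll f u)

/-- The swapping `(x y)·t` on λ-terms, exchanging `x` and `y` at every occurrence. -/
def swapL (x y : LVar) (t : LTerm) : LTerm := renameAll (varMap x y) t

theorem sizeL_renameAll (f : LVar → LVar) (t : LTerm) : sizeL (renameAll f t) = sizeL t := by
  induction t <;> simp [renameAll, sizeL, *]

/-- α-equivalence of λ-terms. -/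
inductive AEq : LTerm → LTerm → Prop
  | var (v) : AEq (.var v) (.var v)
  | const (c) : AEq (.const c) (.const c)
  | app {t t' u u'} : AEq t t' → AEq u u' → AEq (.app t u) (.app t' u')
  | lam {x y t u} (z : LVar) : z ∉ allVarsL t → z ∉ allVarsL u → z ≠ x → z ≠ y →
      AEq (swapL x z t) (swapL y z u) → AEq (.lam x t) (.lam y u)

/-- Naive (possibly capturing) substitution of `u` for the free variable `x`. -/
def nsubst (x : LVar) (u : LTerm) : LTerm → LTerm
  | .var y => if y = x then u else .var y
  | .const c => .const c
  | .app t1 t2 => .app (nsubst x u t1) (nsubst x u t2)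
  | .lam y t => if y = x then .lam y t else .lam y (nsubst x u t)

/-- αβη-convertibility of λ-terms.  The β-rule carries a capture-freeness side
condition; arbitrary redexes are handled by first α-converting. -/
inductive Conv : LTerm → LTerm → Prop
  | refl (t) : Conv t t
  | symm {t u} : Conv t u → Conv u t
  | trans {t u v} : Conv t u → Conv u v → Conv t v
  | appc {t t' u u'} : Conv t t' → Conv u u' → Conv (.app t u) (.app t' u')
  | lamc {x t t'} : Conv t t' → Conv (.lam x t) (.lam x t')
  | alpha {t u} : AEq t u → Conv t u
  | beta {x t u} : (∀ v ∈ FVL u, v ∉ bvarsL t) → Conv (.app (.lam x t) u) (nsubst x u t)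
  | eta {x t} : x ∉ FVL t → Conv (.lam x (.app t (.var x))) t

/-- A fresh variable not occurring in a given finite set. -/
def freshVar (s : Finset LVar) : LVar :=
  .inl ((s.image (fun v => match v with | .inl a => a | .inr b => b)).sup id + 1)

/-- Capture-avoiding simultaneous renaming of free variables along `ρ`. -/
def casub (ρ : LVar → LVar) : LTerm → LTerm
  | .var z => .var (ρ z)
  | .const c => .const c
  | .app t u => .app (casub ρ t) (casub ρ u)
  | .lam z t =>
      if h : ∃ w ∈ FVL t, w ≠ z ∧ ρ w = z then
        let z' := freshVar (allVarsL t ∪ (FVL t).image ρ ∪ {z})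
        .lam z' (casub ρ (swapL z z' t))
      else .lam z (casub (fun w => if w = z then z else ρ w) t)
termination_by t => sizeL t
decreasing_by
  all_goals simp_wf
  all_goals simp [swapL, sizeL_renameAll, sizeL]
  all_goals omega

/-! Sorts and simple types -/

/-- Nominal sorts and arities: atom sorts `ν`, data sorts `δ`, abstraction
sorts `⟨ν⟩τ` and arities `τ₁×…×τₙ→δ`. -/
inductive NSort where
  | atom : ℕ → NSort
  | data : ℕ → NSort
  | abs : ℕ → NSort → NSort
  | arr : List NSort → ℕ → NSort

/-- Simple types with one base type per atom sort and per data sort. -/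
inductive STy where
  | atomT : ℕ → STy
  | dataT : ℕ → STy
  | arrT : STy → STy → STy
deriving DecidableEq

/-- The sort-to-type translation `⟦·⟧`. -/
def trSort : NSort → STy
  | .atom n => .atomT n
  | .data n => .dataT n
  | .abs n τ => .arrT (.atomT n) (trSort τ)
  | .arr τs d => τs.attach.foldr (fun τ T => .arrT (trSort τ.1) T) (.dataT d)
decreasing_by
  all_goals simp_wf
  all_goals first
    | (have := List.sizeOf_lt_of_mem τ.2; omega)
    | omega

/-- A sort is basic if it is an atom sort or a data sort. -/
def NSort.isBasic : NSort → Prop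
  | .atom _ => True
  | .data _ => True
  | _ => False

/-- A nominal signature: sorts of atoms, sorts of variables, arities of function symbols. -/
structure Sig where
  sortA : Atom → ℕ
  sortV : Var → NSort
  arF : ℕ → List NSort × ℕ

/-- The sorting judgement for nominal terms. -/
inductive HasSortN (S : Sig) : NTerm → NSort → Prop
  | atom (a) : HasSortN S (.atom a) (.atom (S.sortA a))
  | app {f ts} : ts.length = (S.arF f).1.length →
      (∀ p ∈ ts.zip (S.arF f).1, HasSortN S p.1 p.2) →
      HasSortN S (.app f ts) (.data (S.arF f).2)
  | abs {a t τ} : HasSortN S t τ → HasSortN S (.abs a t) (.abs (S.sortA a) τ)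
  | susp {π X} : (∀ a, S.sortA (permAtom π a) = S.sortA a) →
      HasSortN S (.susp π X) (S.sortV X)

/-! The translation from nominal terms to λ-terms -/

/-- The atoms capturable by `X` under `Δ`: the sublist of `as` of atoms `a` with `a # X ∉ Δ`. -/
def capList (as : List Atom) (Δ : Finset (Atom × Var)) (X : Var) : List Atom :=
  as.filter (fun a => (a, X) ∉ Δ)

/-- The translation `⟦t⟧_Δ` of a nominal term into a λ-term, relative to the
fixed atom list `as` and the freshness environment `Δ`. -/
def trT (as : List Atom) (Δ : Finset (Atom × Var)) : NTerm → LTerm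
  | .atom a => .var (.inl a)
  | .app f ts => appList (.const f) (ts.attach.map (fun t => trT as Δ t.1))
  | .abs a t => .lam (.inl a) (trT as Δ t)
  | .susp π X => appList (.var (.inr X))
      ((capList as Δ X).map (fun b => .var (.inl (permAtom π b))))
decreasing_by
  all_goals simp_wf
  all_goals first
    | (have := List.sizeOf_lt_of_mem t.2; omega)
    | omega

/-- Typing contexts as total functions. -/
abbrev Ctx := LVar → STy

/-- The simply-typed λ-calculus typing judgement. -/
inductive HasTy (cty : ℕ → STy) : Ctx → LTerm → STy → Prop
  | var (Γ : Ctx) (v) : HasTy cty Γ (.var v) (Γ v)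
  | const (Γ : Ctx) (c) : HasTy cty Γ (.const c) (cty c)
  | lam {Γ : Ctx} {x t T U} : HasTy cty (Function.update Γ x T) t U →
      HasTy cty Γ (.lam x t) (.arrT T U)
  | app {Γ : Ctx} {t u T U} : HasTy cty Γ t (.arrT T U) → HasTy cty Γ u T →
      HasTy cty Γ (.app t u) U

/-- Type of the constant translating a function symbol `f : τ₁×…×τₙ→δ`. -/
def ctySig (S : Sig) (f : ℕ) : STy :=
  (S.arF f).1.foldr (fun τ T => .arrT (trSort τ) T) (.dataT (S.arF f).2)

/-- Type assigned to the free variable translating a nominal variable `X`. -/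
def varTy (S : Sig) (as : List Atom) (Δ : Finset (Atom × Var)) (X : Var) : STy :=
  (capList as Δ X).foldr (fun a T => .arrT (.atomT (S.sortA a)) T) (trSort (S.sortV X))

/-- The typing context of the translation: atoms get their atom-sort base type
and nominal variables get the arrow type over their capturable atoms. -/
def trCtx (S : Sig) (as : List Atom) (Δ : Finset (Atom × Var)) : Ctx
  | .inl a => .atomT (S.sortA a)
  | .inr X => varTy S as Δ X

/-! Higher-order patterns -/

/-- `IsPattern B t` : in the scope of bound variables `B`, every free variable of `t`
is applied to a list of pairwise distinct bound variables. -/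
inductive IsPattern : List LVar → LTerm → Prop
  | bvar {B v} : v ∈ B → IsPattern B (.var v)
  | flex {B : List LVar} {X : Var} {args : List LVar} : (.inr X : LVar) ∉ B → (∀ a ∈ args, a ∈ B) → args.Nodup →
      IsPattern B (appList (.var (.inr X)) (args.map .var))
  | rigid {B h ts} : ((∃ c, h = .const c) ∨ (∃ v, h = .var v ∧ v ∈ B)) →
      (∀ t ∈ ts, IsPattern B t) → IsPattern B (appList h ts)
  | lam {B x t} : IsPattern (x :: B) t → IsPattern B (.lam x t)

/-! Unification problems and their translations -/

/-- Constraints of a (general) nominal unification problem. -/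
inductive NConstraint where
  | eq : NTerm → NTerm → NConstraint
  | fr : Atom → NTerm → NConstraint

/-- A nominal unification problem. -/
abbrev NProb := List NConstraint

/-- An equational nominal unification problem: a list of equality equations. -/
abbrev EProb := List (NTerm × NTerm)

/-- `⟨Δ, σ⟩` solves a constraint. -/
def solvesC (Δ : Finset (Atom × Var)) (σ : NSub) : NConstraint → Prop
  | .eq t u => Alpha Δ (applyN σ t) (applyN σ u)
  | .fr a t => Fresh Δ a (applyN σ t)

/-- `⟨Δ, σ⟩` solves a nominal unification problem. -/
def solvesP (Δ : Finset (Atom × Var)) (σ : NSub) (P : NProb) : Prop :=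
  ∀ c ∈ P, solvesC Δ σ c

/-- `⟨Δ, σ⟩` solves an equational nominal unification problem. -/
def solvesE (Δ : Finset (Atom × Var)) (σ : NSub) (P : EProb) : Prop :=
  ∀ e ∈ P, Alpha Δ (applyN σ e.1) (applyN σ e.2)

/-- A problem is equational if it contains no freshness constraints. -/
def isEquational (P : NProb) : Prop := ∀ c ∈ P, ∀ a t, c ≠ .fr a t

def sizeConstraint : NConstraint → ℕ
  | .eq t u => 1 + sizeN t + sizeN u
  | .fr _ t => 2 + sizeN t

def sizeNP (P : NProb) : ℕ := (P.map sizeConstraint).sum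

def sizeEP (P : EProb) : ℕ := (P.map (fun e => 1 + sizeN e.1 + sizeN e.2)).sum

/-- Variables of an equational problem. -/
def varsEP (P : EProb) : Finset Var := (P.map (fun e => nvars e.1 ∪ nvars e.2)).foldr (· ∪ ·) ∅

/-- Atoms of an equational problem. -/
def atomsEP (P : EProb) : Finset Atom := (P.map (fun e => natoms e.1 ∪ natoms e.2)).foldr (· ∪ ·) ∅

/-- Translation of an equation: both sides are translated with the empty
environment and closed under `λa₁…λaₙ`. -/
def trEq (as : List Atom) (e : NTerm × NTerm) : LTerm × LTerm :=
  (lamList (as.map .inl) (trT as ∅ e.1), lamList (as.map .inl) (trT as ∅ e.2))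

/-- Translation of an equational nominal problem into a higher-order problem. -/
def trProb (as : List Atom) (P : EProb) : List (LTerm × LTerm) := P.map (trEq as)

def sizeLP (Q : List (LTerm × LTerm)) : ℕ := (Q.map (fun e => 1 + sizeL e.1 + sizeL e.2)).sum

/-! λ-substitutions -/

/-- λ-substitutions over the (images of) nominal variables, with explicit domain. -/
abbrev LSub := Var → Option LTerm

/-- Domain of a λ-substitution. -/
def domL (σ : LSub) : Set Var := {X | (σ X).isSome}

/-- Application of a λ-substitution.  (In translated problems the values are
closed with respect to atom variables, so no capture can occur.) -/
def applyL (σ : LSub) : LTerm → LTerm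
  | .var (.inr X) => (σ X).getD (.var (.inr X))
  | .var v => .var v
  | .const c => .const c
  | .lam x t => .lam x (applyL σ t)
  | .app t u => .app (applyL σ t) (applyL σ u)

/-- `σ` solves a higher-order problem up to αβη. -/
def solvesL (σ : LSub) (Q : List (LTerm × LTerm)) : Prop :=
  ∀ e ∈ Q, Conv (applyL σ e.1) (applyL σ e.2)

/-- The translation `⟦σ⟧_Δ` of a nominal substitution. -/
def trSub (as : List Atom) (Δ : Finset (Atom × Var)) (σ : NSub) : LSub :=
  fun X => (σ X).map (fun t => lamList (as.map .inl) (trT as Δ t))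

/-! The reverse translation -/

/-- The reverse translation relation from λ-terms to nominal terms
(nondeterministic because of the choice of the permutation `π`). -/
inductive RevTr (as : List Atom) (Δ : Finset (Atom × Var)) : LTerm → NTerm → Prop
  | atom (a) : RevTr as Δ (.var (.inl a)) (.atom a)
  | appf {f ts us} : ts.length = us.length → (∀ p ∈ ts.zip us, RevTr as Δ p.1 p.2) →
      RevTr as Δ (appList (.const f) ts) (.app f us)
  | lam {a t u} : RevTr as Δ t u → RevTr as Δ (.lam (.inl a) t) (.abs a u)
  | susp {X : Var} {π : Perm0} {cs : List Atom} : (∀ a ∉ as, permAtom π a = a) →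
      cs.map (permAtom π) = capList as Δ X →
      RevTr as Δ (appList (.var (.inr X)) (cs.map (fun c => .var (.inl c))))
        (.susp π.reverse X)

/-- β-reduce the application of a λ-term to the atom variables `as`. -/
def applyAtoms : LTerm → List Atom → LTerm
  | .lam x t, a :: rest => applyAtoms (nsubst x (.var (.inl a)) t) rest
  | t, rest => appList t (rest.map (fun a => .var (.inl a)))

/-! "More general" relations on unifiers -/

/-- `Δ₂ ⊢ σ'(Δ₁)` : every freshness constraint of `Δ₁` holds after applying `σ'`. -/
def freshEnvHolds (Δ₂ : Finset (Atom × Var)) (σ' : NSub) (Δ₁ : Finset (Atom × Var)) : Prop :=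
  ∀ p ∈ Δ₁, Fresh Δ₂ p.1 (applyN σ' (nsuspV p.2))

/-- `⟨Δ₁,σ₁⟩` is more general than `⟨Δ₂,σ₂⟩`. -/
def moreGeneralN (Δ₁ : Finset (Atom × Var)) (σ₁ : NSub)
    (Δ₂ : Finset (Atom × Var)) (σ₂ : NSub) : Prop :=
  ∃ σ' : NSub, freshEnvHolds Δ₂ σ' Δ₁ ∧
    ∀ X ∈ domN σ₁ ∪ domN σ₂,
      Alpha Δ₂ (applyN σ' (applyN σ₁ (nsuspV X))) (applyN σ₂ (nsuspV X))

/-- A λ-substitution `σ₁` is more general than `σ₂` (modulo αβη). -/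
def moreGeneralL (σ₁ σ₂ : LSub) : Prop :=
  ∃ σ' : LSub, ∀ X ∈ domL σ₁ ∪ domL σ₂,
    Conv (applyL σ' (applyL σ₁ (.var (.inr X)))) (applyL σ₂ (.var (.inr X)))


/-!
The only α-equivalence rule relating abstractions over distinct atoms `a` and `b` is the
second abstraction rule, whose side condition for `a.b.t ≈ b.b.t` is `a # b.t`, i.e. `a # t`
since `a ≠ b`. Conversely, from `a # t` the same rule applied twice derives `a.b.t ≈ b.b.t`:
the inner step needs `b # (a b)·t`, which is equivariance of freshness, and
`t ≈ (b a)·(a b)·t`, which holds because the composite permutation fixes every atom.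
Solutions of the two problems therefore coincide, as substitution commutes with abstraction.
-/

theorem swapAtom_left (a b : Atom) : swapAtom a b a = b := by
  simp [swapAtom]

theorem swapAtom_right (a b : Atom) : swapAtom a b b = a := by
  unfold swapAtom; split_ifs <;> simp_all

theorem swapAtom_comm (a b c : Atom) : swapAtom a b c = swapAtom b a c := by
  unfold swapAtom; split_ifs <;> simp_all

theorem swapAtom_swapAtom (a b c : Atom) : swapAtom a b (swapAtom a b c) = c := by
  unfold swapAtom; split_ifs <;> simp_all

@[simp]
theorem permAtom_append (π₁ π₂ : Perm0) (c : Atom) :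
    permAtom (π₁ ++ π₂) c = permAtom π₁ (permAtom π₂ c) := by
  simp [permAtom, List.foldr_append]

@[simp]
theorem permAtom_reverse_permAtom (π : Perm0) (c : Atom) :
    permAtom π.reverse (permAtom π c) = c := by
  induction π with
  | nil => rfl
  | cons p π ih =>
      rw [List.reverse_cons, permAtom_append]
      exact (congrArg (permAtom π.reverse) (swapAtom_swapAtom p.1 p.2 _)).trans ih

theorem permAtom_injective (π : Perm0) : Function.Injective (permAtom π) :=
  Function.LeftInverse.injective (permAtom_reverse_permAtom π)

section permTerm

variable (π : Perm0)

@[simp]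
theorem permTerm_atom (c : Atom) : permTerm π (.atom c) = .atom (permAtom π c) := by
  rw [permTerm]

@[simp]
theorem permTerm_app (f : ℕ) (ts : List NTerm) :
    permTerm π (.app f ts) = .app f (ts.map (permTerm π)) := by
  rw [permTerm]; simp

@[simp]
theorem permTerm_abs (c : Atom) (t : NTerm) :
    permTerm π (.abs c t) = .abs (permAtom π c) (permTerm π t) := by
  rw [permTerm]

@[simp]
theorem permTerm_susp (π' : Perm0) (X : Var) : permTerm π (.susp π' X) = .susp (π ++ π') X := by
  rw [permTerm]

theorem permTerm_permTerm (π' : Perm0) : ∀ t : NTerm,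
    permTerm π (permTerm π' t) = permTerm (π ++ π') t
  | .atom c => by simp
  | .app f ts => by
      simp only [permTerm_app, List.map_map, NTerm.app.injEq, true_and]
      exact List.map_congr_left fun t ht => permTerm_permTerm π' t
  | .abs c t => by simp [permTerm_permTerm π' t]
  | .susp π'' X => by simp
decreasing_by
  all_goals simp_wf
  all_goals first
    | (have := List.sizeOf_lt_of_mem ht; omega)
    | omega

end permTerm

theorem Fresh.permTerm {Δ : Finset (Atom × Var)} {a : Atom} {t : NTerm} (h : Fresh Δ a t)
    (π : Perm0) : Fresh Δ (permAtom π a) (permTerm π t) := by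
  induction h with
  | atom hne =>
      rw [permTerm_atom]
      exact .atom fun he => hne (permAtom_injective π he)
  | susp hmem =>
      rw [permTerm_susp]
      exact .susp (by simpa using hmem)
  | app _ ih =>
      rw [permTerm_app]
      refine .app fun t' ht' => ?_
      obtain ⟨t, ht, rfl⟩ := List.mem_map.mp ht'
      exact ih t ht
  | abs1 =>
      rw [permTerm_abs]
      exact .abs1
  | abs2 hne _ ih =>
      rw [permTerm_abs]
      exact .abs2 (fun he => hne (permAtom_injective π he)) ih

theorem Alpha.self_permTerm (Δ : Finset (Atom × Var)) {π : Perm0} (hπ : ∀ c, permAtom π c = c) :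
    ∀ t : NTerm, Alpha Δ t (permTerm π t)
  | .atom c => by simpa [hπ c] using Alpha.atom c
  | .app f ts => by
      have hzip : ts.zip (ts.map (permTerm π)) = ts.map fun t => (t, permTerm π t) := by
        simpa using List.zip_map' (f := id) (g := permTerm π) (l := ts)
      rw [permTerm_app]
      refine .app (by simp) fun p hp => ?_
      rw [hzip] at hp
      obtain ⟨t, ht, rfl⟩ := List.mem_map.mp hp
      exact Alpha.self_permTerm Δ hπ t
  | .abs c t => by
      simpa [hπ c] using Alpha.abs1 (a := c) (Alpha.self_permTerm Δ hπ t)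
  | .susp π' X => by
      rw [permTerm_susp]
      exact .susp fun c hc => absurd (by simp [hπ]) hc
decreasing_by
  all_goals simp_wf
  all_goals first
    | (have := List.sizeOf_lt_of_mem ht; omega)
    | omega

section DoubleAbstraction

variable {Δ : Finset (Atom × Var)} {a b : Atom} {t : NTerm}

theorem fresh_of_alpha_abs_abs (hab : a ≠ b)
    (h : Alpha Δ (.abs a (.abs b t)) (.abs b (.abs b t))) : Fresh Δ a t := by
  cases h with
  | abs1 _ => exact absurd rfl hab
  | abs2 _ _ hfresh =>
      cases hfresh with
      | abs1 => exact absurd rfl hab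
      | abs2 _ hat => exact hat

theorem alpha_abs_abs_of_fresh (hab : a ≠ b) (h : Fresh Δ a t) :
    Alpha Δ (.abs a (.abs b t)) (.abs b (.abs b t)) := by
  have hswap : swapTerm a b (.abs b t) = .abs a (swapTerm a b t) := by
    simp [swapTerm, permAtom, swapAtom_right]
  have hcancel : Alpha Δ t (swapTerm b a (swapTerm a b t)) := by
    rw [swapTerm, swapTerm, permTerm_permTerm]
    refine Alpha.self_permTerm Δ (fun c => ?_) t
    change swapAtom b a (swapAtom a b c) = c
    rw [swapAtom_comm b a, swapAtom_swapAtom]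
  have hfresh : Fresh Δ b (swapTerm a b t) := by
    simpa [swapTerm, permAtom, swapAtom_left] using h.permTerm [(a, b)]
  refine .abs2 hab ?_ (.abs2 hab h)
  rw [hswap]
  exact .abs2 hab.symm hcancel hfresh

end DoubleAbstraction

/-- conversely, a derivation of `Δ ⊢ a.b.t ≈ b.b.t` (with `a ≠ b`)
yields `Δ ⊢ a # t`; hence the freshness equation `a #? t` has exactly the same
solutions as the equality equation `a.b.t ≈? b.b.t`. -/
theorem statement6 (a b : Atom) (hab : a ≠ b) :
    (∀ (Δ : Finset (Atom × Var)) (t : NTerm),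
        Alpha Δ (.abs a (.abs b t)) (.abs b (.abs b t)) → Fresh Δ a t) ∧
    (∀ (Δ : Finset (Atom × Var)) (σ : NSub) (t : NTerm),
        solvesC Δ σ (.fr a t) ↔
          solvesC Δ σ (.eq (.abs a (.abs b t)) (.abs b (.abs b t)))) := by
  refine ⟨fun _ _ => fresh_of_alpha_abs_abs hab, fun Δ σ t => ?_⟩
  simp only [solvesC, applyN]
  exact ⟨alpha_abs_abs_of_fresh hab, fresh_of_alpha_abs_abs hab⟩
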